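/- arXiv:2412.20544 — 2 statements merged into one kernel-verified Lean document; each statement's English description precedes it below -/
import Mathlib

section
/- For n = 1 (V = ℂ² with symplectic form), the complement in 𝔰𝔭₂ ⊕ V of the Sp₂-saturation of the slice Σ is contained in the union of 𝔰𝔭₂ × {0} and {(x,v) : x = c·v² for some c ≠ 1}, both of which have codimension 2 in 𝔰𝔭₂ ⊕ V. -/
/-!
For `v ≠ 0` pick `w` with `⟨v, w⟩ = 1`. Whenever also `⟨x w, w⟩ = 1`, the matrix with columns
`x w` and `w` is symplectic, conjugates `e + s f` (where `x² = s • 1`) to `x`, and sends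
`(1, ⟨x w, v⟩)` to `v`, so `(x, v)` lies in the saturation. Along the line `w + t v` the condition
`⟨v, w + t v⟩ = 1` persists and `⟨x (w + t v), w + t v⟩` is a quadratic polynomial in `t`, which
over `ℂ` takes the value `1` unless it is constant. If it is constant, the quadratic form `⟨x ·, ·⟩`
and its polar form vanish at `v`, so the form is `c ⟨v, ·⟩²`, i.e. `x = c v²` with `c ≠ 1`.
-/

open Matrix

namespace Sp2Slice

/-- The standard symplectic matrix on `ℂ²`. -/
noncomputable def J : Matrix (Fin 2) (Fin 2) ℂ := !![0, 1; -1, 0]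

/-- Standard regular `sl₂`-triple elements in `𝔰𝔭₂`. -/
noncomputable def eM : Matrix (Fin 2) (Fin 2) ℂ := !![0, 1; 0, 0]
noncomputable def fM : Matrix (Fin 2) (Fin 2) ℂ := !![0, 0; 1, 0]
noncomputable def hM : Matrix (Fin 2) (Fin 2) ℂ := !![1, 0; 0, -1]

/-- The rank-one element `v² : u ↦ ⟨v,u⟩v` of `𝔰𝔭₂`, as a matrix. -/
noncomputable def vsq (v : Fin 2 → ℂ) : Matrix (Fin 2) (Fin 2) ℂ :=
  Matrix.of fun i j => (v ⬝ᵥ (J *ᵥ Pi.single j 1)) * v i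

/-- The saturation `Sp₂ · Σ` of the slice `Σ = {(e + s·f, (1,a))}` under the
`Sp₂`-action `g · (x,v) = (g x g⁻¹, g v)`. -/
def saturation : Set (Matrix (Fin 2) (Fin 2) ℂ × (Fin 2 → ℂ)) :=
  {p | ∃ g : Matrix (Fin 2) (Fin 2) ℂ, gᵀ * J * g = J ∧ IsUnit g ∧
    ∃ s a : ℂ, p.1 = g * (eM + s • fM) * g⁻¹ ∧ p.2 = g *ᵥ ![1, a]}

/-- The form `⟨v, w⟩`. -/
noncomputable def symp (v w : Fin 2 → ℂ) : ℂ := v ⬝ᵥ (J *ᵥ w)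

lemma symp_apply (v w : Fin 2 → ℂ) : symp v w = v 0 * w 1 - v 1 * w 0 := by
  simp [symp, J, mulVec, dotProduct, Fin.sum_univ_two, sub_eq_add_neg, mul_comm]

lemma vsq_eq (v : Fin 2 → ℂ) : vsq v = !![-(v 0 * v 1), v 0 ^ 2; -(v 1 ^ 2), v 0 * v 1] := by
  ext i j
  fin_cases i <;> fin_cases j <;>
    simp [vsq, J, mulVec, dotProduct, Fin.sum_univ_two, Pi.single_apply] <;> ring

lemma eq_of_transpose_mul_J_add_J_mul_eq_zero {x : Matrix (Fin 2) (Fin 2) ℂ}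
    (hx : xᵀ * J + J * x = 0) : x = !![x 0 0, x 0 1; x 1 0, -x 0 0] := by
  have h : x 0 0 + x 1 1 = 0 := by
    simpa [J, mul_apply, vecMul, dotProduct, Fin.sum_univ_two] using congrFun (congrFun hx 0) 1
  rw [neg_eq_of_add_eq_zero_right h]
  exact eta_fin_two x

lemma symp_mulVec_add_smul (x : Matrix (Fin 2) (Fin 2) ℂ) (v w : Fin 2 → ℂ) (t : ℂ) :
    symp (x *ᵥ (w + t • v)) (w + t • v) =
      symp (x *ᵥ v) v * t ^ 2 + (symp (x *ᵥ v) w + symp (x *ᵥ w) v) * t + symp (x *ᵥ w) w := by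
  simp only [symp_apply, mulVec_add, mulVec_smul, Pi.add_apply, Pi.smul_apply, smul_eq_mul]
  ring

lemma exists_symp_eq_one {v : Fin 2 → ℂ} (hv : v ≠ 0) : ∃ w, symp v w = 1 := by
  simp only [symp_apply]
  by_cases h0 : v 0 = 0
  · have h1 : v 1 ≠ 0 := fun h1 => hv (by ext i; fin_cases i <;> simp [h0, h1])
    exact ⟨![-(v 1)⁻¹, 0], by simp [h0, h1]⟩
  · exact ⟨![0, (v 0)⁻¹], by simp [h0]⟩

open Polynomial in
lemma exists_quadratic_eq_zero_of_ne_zero {K : Type*} [Field K] [IsAlgClosed K] {a b c : K}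
    (h : a ≠ 0 ∨ b ≠ 0) : ∃ t, a * t ^ 2 + b * t + c = 0 := by
  by_cases ha : a = 0
  · have hb := h.resolve_left (not_not.2 ha)
    exact ⟨-c / b, by rw [ha]; field_simp; ring⟩
  · have hdeg : (C a * X ^ 2 + C b * X + C c).degree ≠ 0 := by
      rw [degree_quadratic ha]; decide
    obtain ⟨t, ht⟩ := IsAlgClosed.exists_root _ hdeg
    exact ⟨t, by simpa using ht⟩

lemma transpose_mul_J_mul (g : Matrix (Fin 2) (Fin 2) ℂ) : gᵀ * J * g = g.det • J := by
  ext i j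
  fin_cases i <;> fin_cases j <;> simp [J, det_fin_two, mul_apply, Fin.sum_univ_two] <;> ring

lemma eq_symp_smul_add_symp_smul {u w : Fin 2 → ℂ} (h : symp u w = 1) (v : Fin 2 → ℂ) :
    v = symp v w • u + symp u v • w := by
  rw [symp_apply] at h
  ext i
  fin_cases i <;> simp [symp_apply] <;> linear_combination (-v _) * h

lemma mem_saturation_of_symp_eq_one {x : Matrix (Fin 2) (Fin 2) ℂ} {v w : Fin 2 → ℂ}
    (hx : xᵀ * J + J * x = 0) (hvw : symp v w = 1) (hxw : symp (x *ᵥ w) w = 1) :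
    (x, v) ∈ saturation := by
  -- `x² = (α² + βγ) • 1`, so `x` acts on the columns `(x w, w)` of `g` as `e + (α² + βγ) f` does.
  obtain ⟨α, β, γ, rfl⟩ : ∃ α β γ, x = !![α, β; γ, -α] :=
    ⟨_, _, _, eq_of_transpose_mul_J_add_J_mul_eq_zero hx⟩
  set u := !![α, β; γ, -α] *ᵥ w
  set g : Matrix (Fin 2) (Fin 2) ℂ := !![u 0, w 0; u 1, w 1]
  have hdet : g.det = 1 := by rw [det_fin_two_of, ← hxw, symp_apply]; ring
  have hg : IsUnit g := (isUnit_iff_isUnit_det g).2 (hdet ▸ isUnit_one)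
  have hxg : !![α, β; γ, -α] * g = g * (eM + (α ^ 2 + β * γ) • fM) := by
    ext i j
    fin_cases i <;> fin_cases j <;> simp [g, u, eM, fM, vecHead, vecTail] <;> ring
  refine ⟨g, by rw [transpose_mul_J_mul, hdet, one_smul], hg, α ^ 2 + β * γ, symp u v, ?_, ?_⟩
  · rw [← hxg, Matrix.mul_assoc, mul_nonsing_inv _ (hdet ▸ isUnit_one), Matrix.mul_one]
  · conv_lhs => rw [eq_symp_smul_add_symp_smul hxw v, hvw]
    ext i
    fin_cases i <;> simp [g]

lemma eq_smul_vsq_of_symp_eq_zero {x : Matrix (Fin 2) (Fin 2) ℂ} {v w : Fin 2 → ℂ}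
    (hx : xᵀ * J + J * x = 0) (hvw : symp v w = 1) (hvv : symp (x *ᵥ v) v = 0)
    (hpolar : symp (x *ᵥ v) w + symp (x *ᵥ w) v = 0) :
    x = symp (x *ᵥ w) w • vsq v := by
  obtain ⟨α, β, γ, rfl⟩ : ∃ α β γ, x = !![α, β; γ, -α] :=
    ⟨_, _, _, eq_of_transpose_mul_J_add_J_mul_eq_zero hx⟩
  simp only [symp_apply, vsq_eq, mulVec, dotProduct, Fin.sum_univ_two, of_apply, cons_val',
    cons_val_zero, cons_val_one, cons_val_fin_one] at hvw hvv hpolar ⊢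
  set D := v 0 * w 1 - v 1 * w 0
  -- The coefficients come from inverting the change of basis `(v, w)`, of determinant `D = 1`,
  -- in the Gram matrix of `⟨x ·, ·⟩`, which is `diag(0, c)` in that basis.
  ext i j
  fin_cases i <;> fin_cases j <;> simp only [Fin.zero_eta, Fin.mk_one, of_apply, cons_val',
    cons_val_zero, cons_val_one, cons_val_fin_one, Matrix.smul_apply, smul_eq_mul]
  · linear_combination
      (-α * (1 + D)) * hvw - w 0 * w 1 * hvv + ((v 0 * w 1 + v 1 * w 0) / 2) * hpolar
  · linear_combination (-β * (1 + D)) * hvw + w 0 ^ 2 * hvv - w 0 * v 0 * hpolar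
  · linear_combination (-γ * (1 + D)) * hvw - w 1 ^ 2 * hvv + w 1 * v 1 * hpolar
  · linear_combination
      (α * (1 + D)) * hvw + w 0 * w 1 * hvv - ((v 0 * w 1 + v 1 * w 0) / 2) * hpolar

lemma mem_saturation_or_eq_smul_vsq {x : Matrix (Fin 2) (Fin 2) ℂ} {v : Fin 2 → ℂ}
    (hx : xᵀ * J + J * x = 0) (hv : v ≠ 0) :
    (x, v) ∈ saturation ∨ ∃ c : ℂ, c ≠ 1 ∧ x = c • vsq v := by
  obtain ⟨w, hvw⟩ := exists_symp_eq_one hv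
  by_cases hconst : symp (x *ᵥ v) v = 0 ∧ symp (x *ᵥ v) w + symp (x *ᵥ w) v = 0
  · by_cases hc : symp (x *ᵥ w) w = 1
    · exact .inl (mem_saturation_of_symp_eq_one hx hvw hc)
    · exact .inr ⟨_, hc, eq_smul_vsq_of_symp_eq_zero hx hvw hconst.1 hconst.2⟩
  · obtain ⟨t, ht⟩ :=
      exists_quadratic_eq_zero_of_ne_zero (c := symp (x *ᵥ w) w - 1) (not_and_or.1 hconst)
    have hline : symp v (w + t • v) = 1 := by
      rw [symp_apply] at hvw ⊢
      simp only [Pi.add_apply, Pi.smul_apply, smul_eq_mul]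
      linear_combination hvw
    refine .inl (mem_saturation_of_symp_eq_one hx hline ?_)
    rw [symp_mulVec_add_smul]
    linear_combination ht

lemma eq_smul_eM_add_smul_fM_add_smul_hM {x : Matrix (Fin 2) (Fin 2) ℂ}
    (hx : xᵀ * J + J * x = 0) : x = x 0 1 • eM + x 1 0 • fM + x 0 0 • hM := by
  conv_lhs => rw [eq_of_transpose_mul_J_add_J_mul_eq_zero hx]
  ext i j
  fin_cases i <;> fin_cases j <;> simp [eM, fM, hM]

/-- For `n = 1`, the complement in `𝔰𝔭₂ ⊕ ℂ²` of the `Sp₂`-saturation of the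
slice `Σ` is contained in the union of `𝔰𝔭₂ × {0}` and `{(x,v) : x = c·v², c ≠ 1}`; moreover
both of these sets are images of `3`-parameter families, hence have codimension `2` in the
`5`-dimensional space `𝔰𝔭₂ ⊕ ℂ²`. -/
theorem complement_of_saturation_has_codim_two :
    (∀ p : Matrix (Fin 2) (Fin 2) ℂ × (Fin 2 → ℂ),
      p.1ᵀ * J + J * p.1 = 0 → p ∉ saturation →
        (p.2 = 0 ∨ ∃ c : ℂ, c ≠ 1 ∧ p.1 = c • vsq p.2)) ∧
    ({p : Matrix (Fin 2) (Fin 2) ℂ × (Fin 2 → ℂ) | p.1ᵀ * J + J * p.1 = 0 ∧ p.2 = 0} ⊆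
      Set.range (fun c : Fin 3 → ℂ => ((c 0 • eM + c 1 • fM + c 2 • hM : Matrix (Fin 2) (Fin 2) ℂ),
        (0 : Fin 2 → ℂ)))) ∧
    ({p : Matrix (Fin 2) (Fin 2) ℂ × (Fin 2 → ℂ) | ∃ c : ℂ, c ≠ 1 ∧ p.1 = c • vsq p.2} ⊆
      Set.range (fun c : Fin 3 → ℂ => (c 0 • vsq ![c 1, c 2], ![c 1, c 2]))) := by
  refine ⟨fun ⟨x, v⟩ hx hsat => ?_, ?_, ?_⟩
  · by_cases hv : v = 0
    · exact .inl hv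
    · exact .inr ((mem_saturation_or_eq_smul_vsq hx hv).resolve_left hsat)
  · rintro ⟨x, v⟩ ⟨hx, rfl⟩
    exact ⟨![x 0 1, x 1 0, x 0 0], by simp [← eq_smul_eM_add_smul_fM_add_smul_hM hx]⟩
  · rintro ⟨x, v⟩ ⟨c, -, hx : x = c • vsq v⟩
    have hv : ![v 0, v 1] = v := FinVec.etaExpand_eq v
    exact ⟨![c, v 0, v 1], by simp [hx, hv]⟩

end Sp2Slice
end

section
/- Let X be an affine variety with coordinate ring C[X], and suppose C[X] is normal with fraction field K. Let D ⊆ K be a subring containing C[X] such that every element of D is regular on an open subset of Spec C[X] whose complement has codimension ≥ 2. Then D = C[X]. (Algebraic Hartogs: a rational function on a normal affine variety regular outside codimension 2 is regular.) -/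
open IsLocalRing

set_option synthInstance.maxHeartbeats 1000000 in
set_option maxHeartbeats 2000000 in
/-- algebraic Hartogs: Let `A` be a Noetherian integrally closed (normal)
domain (the coordinate ring of a normal affine variety) with fraction field `K`, and let
`D ⊆ K` be a subring containing `A`. If every element of `D` is regular in codimension 1,
i.e. lies in the local ring `A_p` for every height-one prime `p` (equivalently, is regular
on an open subset whose complement has codimension ≥ 2), then `D = A`. -/
theorem algebraic_hartogs
    (A : Type*) [CommRing A] [IsDomain A] [IsIntegrallyClosed A] [IsNoetherianRing A]
    (D : Subalgebra A (FractionRing A))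
    (hD : ∀ x ∈ D, ∀ p : PrimeSpectrum A, p.asIdeal ≠ ⊥ →
      (∀ q : PrimeSpectrum A, q.asIdeal < p.asIdeal → q.asIdeal = ⊥) →
      ∃ s ∉ p.asIdeal, ∃ a : A,
        x * algebraMap A (FractionRing A) s = algebraMap A (FractionRing A) a) :
    D = ⊥ := by
  refine le_antisymm (fun x hx => ?_) bot_le
  rw [Algebra.mem_bot]
  by_contra hxA
  set φ := algebraMap A (FractionRing A) with hφ
  obtain ⟨c, b, hb, hxcb⟩ := IsFractionRing.div_surjective (A := A) x
  have hb0 : b ≠ 0 := nonZeroDivisors.ne_zero hb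
  have hbK : algebraMap A (FractionRing A) b ≠ 0 :=
    fun h => hb0 (IsFractionRing.to_map_eq_zero_iff.mp h)
  -- annihilator characterization
  have hann : ∀ c' a : A,
      a ∈ (⊥ : Submodule A (A ⧸ Ideal.span {b})).colon {(Ideal.Quotient.mk (Ideal.span {b})) c'}
        ↔ ∃ r : A, a * c' = r * b := by
    intro c' a
    rw [Submodule.mem_colon_singleton, Submodule.mem_bot, Algebra.smul_def,
      Ideal.Quotient.algebraMap_eq, ← map_mul, Ideal.Quotient.eq_zero_iff_mem,
      Ideal.mem_span_singleton']
    exact ⟨fun ⟨r, h⟩ => ⟨r, h.symm⟩, fun ⟨r, h⟩ => ⟨r, h.symm⟩⟩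
  have hm0 : (Ideal.Quotient.mk (Ideal.span {b})) c ≠ 0 := by
    intro h
    rw [Ideal.Quotient.eq_zero_iff_mem, Ideal.mem_span_singleton'] at h
    obtain ⟨r, hr⟩ := h
    refine hxA ⟨r, ?_⟩
    rw [← hxcb, eq_div_iff hbK, ← map_mul, hr]
  obtain ⟨P, hP, hle⟩ := exists_le_isAssociatedPrime_of_isNoetherianRing A _ hm0
  obtain ⟨hPprime, m1, hm1⟩ := isAssociatedPrime_iff.mp hP
  obtain ⟨c', rfl⟩ := Ideal.Quotient.mk_surjective m1
  have hPc : ∀ a ∈ P, ∃ k : A, a * c' = k * b := fun a ha => (hann c' a).mp (hm1 ▸ ha)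
  have hbP : b ∈ P := hm1 ▸ (hann c' b).mpr ⟨c', by ring⟩
  have hPne : P ≠ ⊥ := fun h => hb0 (by simpa [h] using hbP)
  have hc' : ∀ s : A, s ∉ P → ¬∃ k : A, s * c' = k * b := by
    rintro s hs ⟨k, hk⟩
    exact hs (hm1 ▸ (hann c' s).mpr ⟨k, hk⟩)
  have hle' : P.primeCompl ≤ nonZeroDivisors A := P.primeCompl_le_nonZeroDivisors
  set R := Localization.subalgebra.ofField (FractionRing A) P.primeCompl hle' with hR
  have hmemR : ∀ y : FractionRing A, y ∈ R ↔ ∃ a s : A, s ∉ P ∧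
      y = algebraMap A (FractionRing A) a * (algebraMap A (FractionRing A) s)⁻¹ := by
    intro y
    constructor
    · rintro ⟨a, s, hs, rfl⟩
      exact ⟨a, s, hs, rfl⟩
    · rintro ⟨a, s, hs, rfl⟩
      exact ⟨a, s, hs, rfl⟩
  haveI : IsNoetherianRing R := IsLocalization.isNoetherianRing P.primeCompl R ‹_›
  haveI : IsLocalRing R := IsLocalization.AtPrime.isLocalRing R P
  haveI : IsIntegrallyClosed R := isIntegrallyClosed_of_isLocalization R P.primeCompl hle'
  set y : FractionRing A := φ c' * (φ b)⁻¹ with hy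
  have hmapne : ∀ s : A, s ∉ P → φ s ≠ 0 := by
    intro s hs h
    exact hs (by simpa [IsFractionRing.to_map_eq_zero_iff.mp h] using P.zero_mem)
  have hynotR : y ∉ R := by
    intro hyR
    obtain ⟨a, s, hs, hrep⟩ := (hmemR y).mp hyR
    refine hc' s hs ⟨a, ?_⟩
    have hsK : φ s ≠ 0 := hmapne s hs
    apply IsFractionRing.injective A (FractionRing A)
    rw [map_mul, map_mul]
    field_simp [hy] at hrep
    rw [hy, eq_div_iff hsK] at hrep
    rw [← hrep]
    field_simp
    rw [hφ, mul_div_assoc, div_self hbK]; ring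
  have hy_mul : ∀ a ∈ P, ∃ k : A, y * φ a = φ k := by
    intro a ha
    obtain ⟨k, hk⟩ := hPc a ha
    refine ⟨k, ?_⟩
    have h2 : φ (a * c') = φ (k * b) := by rw [hk]
    have h3 : y * φ a = φ (a * c') / φ b := by rw [map_mul, hy]; ring
    rw [h3, h2, map_mul, mul_div_assoc, div_self hbK, mul_one]
  -- every element of the maximal ideal is multiplied into R by y
  have hz_rep : ∀ z : R, z ∈ maximalIdeal R → ∃ k : R, y * (z : FractionRing A) = (k : FractionRing A) := by
    intro z hz
    obtain ⟨a, s, hs, hzrep⟩ := (hmemR (z : FractionRing A)).mp z.2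
    by_cases haP : a ∈ P
    · obtain ⟨k, hk⟩ := hy_mul a haP
      refine ⟨⟨φ k * (φ s)⁻¹, (hmemR _).mpr ⟨k, s, hs, rfl⟩⟩, ?_⟩
      calc y * (z : FractionRing A) = (y * φ a) * (φ s)⁻¹ := by rw [hzrep]; ring
        _ = φ k * (φ s)⁻¹ := by rw [hk]
    · exfalso
      have hw : (φ s * (φ a)⁻¹ : FractionRing A) ∈ R := (hmemR _).mpr ⟨s, a, haP, rfl⟩
      have hzu : IsUnit z := by
        refine IsUnit.of_mul_eq_one ⟨_, hw⟩ ?_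
        apply Subtype.ext
        push_cast
        rw [hzrep]
        field_simp [hmapne a haP, hmapne s hs]
        rw [hφ, mul_div_assoc, div_self (hmapne s hs : algebraMap A (FractionRing A) s ≠ 0), mul_one]
      exact (IsLocalRing.mem_maximalIdeal z).mp hz hzu
  have hcoe : ∀ r : R, algebraMap R (FractionRing A) r = (r : FractionRing A) := fun r => rfl
  set Msub := Submodule.map (Algebra.linearMap (↥R) (FractionRing A)) (maximalIdeal ↥R) with hMsub
  have hbR : algebraMap A R b ∈ maximalIdeal R :=
    (IsLocalization.AtPrime.to_map_mem_maximal_iff R P b).mpr hbP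
  by_cases hcase : ∀ w ∈ Msub, y * w ∈ Msub
  · -- y is integral over R, hence in R: contradiction
    have hMne : Msub ≠ ⊥ := by
      rw [Submodule.ne_bot_iff]
      refine ⟨φ b, ⟨algebraMap A R b, hbR, ?_⟩, hbK⟩
      show algebraMap R (FractionRing A) (algebraMap A R b) = φ b
      rw [← IsScalarTower.algebraMap_apply]
    have hMfg : Msub.FG := (IsNoetherian.noetherian (maximalIdeal R)).map _
    have hint : IsIntegral R y :=
      isIntegral_of_smul_mem_submodule Msub hMne hMfg y (by
        intro n hn
        rw [smul_eq_mul]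
        exact hcase n hn)
    obtain ⟨r, hr⟩ := IsIntegrallyClosed.algebraMap_eq_of_integral hint
    exact hynotR (hr ▸ r.2)
  · push_neg at hcase
    obtain ⟨w, hwM, hyw⟩ := hcase
    obtain ⟨z, hz, rfl⟩ := hwM
    obtain ⟨k, hk⟩ := hz_rep z hz
    have hkmax : k ∉ maximalIdeal R := by
      intro h
      exact hyw ⟨k, h, hk.symm⟩
    have hku : IsUnit k := by
      by_contra h
      exact hkmax ((IsLocalRing.mem_maximalIdeal k).mpr h)
    set u := hku.unit with hu
    set t : R := ↑u⁻¹ * z with ht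
    have htmax : t ∈ maximalIdeal R := Ideal.mul_mem_left _ _ hz
    have hprin : (maximalIdeal R).IsPrincipal := by
      refine ⟨t, le_antisymm ?_ ?_⟩
      · intro z' hz'
        obtain ⟨k', hk'⟩ := hz_rep z' hz'
        refine Ideal.mem_span_singleton'.mpr ⟨k', ?_⟩
        apply Subtype.ext
        push_cast
        have huk : (k * ↑u⁻¹ : R) = 1 := by
          rw [hu]
          simp [IsUnit.unit_spec]
        have hukK : ((k : FractionRing A) * ((↑u⁻¹ : R) : FractionRing A)) = 1 := by
          rw [← MulMemClass.coe_mul, huk, OneMemClass.coe_one]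
        calc (↑k' * (↑(↑u⁻¹ : R) * ↑z) : FractionRing A) = (y * ↑z') * (↑(↑u⁻¹ : R) * ↑z) := by rw [hk']
          _ = (↑z' : FractionRing A) * ((y * ↑z) * ↑(↑u⁻¹ : R)) := by ring
          _ = (↑z' : FractionRing A) * ((↑k : FractionRing A) * ↑(↑u⁻¹ : R)) := by rw [hk]
          _ = (↑z' : FractionRing A) := by rw [hukK, mul_one]
      · exact (Submodule.span_singleton_le_iff_mem t _).mpr htmax
    obtain ⟨-, hPmax⟩ :=
      ((tfae_of_isNoetherianRing_of_isLocalRing_of_isDomain R).out 4 3).mp hprin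
    have hmin : ∀ q : PrimeSpectrum A, q.asIdeal < P → q.asIdeal = ⊥ := by
      intro q hq
      by_contra hq0
      obtain ⟨⟨Q, hQprime⟩, hQ⟩ :=
        (IsLocalization.AtPrime.orderIsoOfPrime R P).surjective ⟨q.asIdeal, q.2, hq.le⟩
      have hcomap : Ideal.comap (algebraMap A R) Q = q.asIdeal := congrArg Subtype.val hQ
      have hQ0 : Q ≠ ⊥ := by
        rintro rfl
        apply hq0
        rw [← hcomap, Ideal.comap_bot_of_injective _ (IsLocalization.injective R hle')]
      have hcm := IsLocalization.AtPrime.under_maximalIdeal (S := ↥R) (I := P)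
      rw [hPmax Q hQ0 hQprime] at hcomap
      exact hq.ne' (hcm.symm.trans hcomap)
    obtain ⟨s, hs, a, hxs⟩ := hD x hx ⟨P, hPprime⟩ hPne hmin
    apply hs
    refine hle ((hann c s).mpr ⟨a, ?_⟩)
    apply IsFractionRing.injective A (FractionRing A)
    rw [map_mul, map_mul]
    have hcb : φ c = x * φ b := by rw [← hxcb, div_mul_cancel₀ _ hbK]
    calc φ s * φ c = (x * φ s) * φ b := by rw [hcb]; ring
      _ = φ a * φ b := by rw [hxs]
end
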